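/- arXiv:2403.04784 — 2 statements merged into one kernel-verified Lean document; each statement's English description precedes it below -/
import Mathlib

section
/- For tokens X = {x_1,...,x_l} in R^d, if x_i satisfies the separation condition Δ_i = x_i^T x_i - max_{j≠i} x_i^T x_j ≥ 2/(α·l) + (1/α)·log(2(l-1)·l·α·M²) where M = max_j ||x_j||, then for any ξ with ||ξ - x_i|| ≤ 1/(α·l·M), the softmax retrieval satisfies ||x_i - X·softmax(α·X^T·ξ)|| ≤ 2M(l-1)·exp(2/l - α·Δ_i). -/
open RealInnerProductSpace

/-- Exponentially small retrieval error: if token `x i` has separation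
`Δᵢ = ⟪xᵢ, xᵢ⟫ - max_{j ≠ i} ⟪xᵢ, xⱼ⟫` satisfying
`Δᵢ ≥ 2/(αl) + (1/α) log (2(l-1)lαM²)` where `M = max_j ‖xⱼ‖`, then for any query `ξ`
with `‖ξ - xᵢ‖ ≤ 1/(αlM)`, the softmax retrieval `X softmax(α Xᵀ ξ)` is within
`2M(l-1) exp(2/l - αΔᵢ)` of `xᵢ`. -/
theorem stmt7 (d l : ℕ) (x : Fin l → EuclideanSpace ℝ (Fin d)) (i : Fin l)
    (hne : (Finset.univ.erase i).Nonempty)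
    (α M Δi : ℝ) (hα : 0 < α)
    (hM : IsGreatest (Set.range (fun j => ‖x j‖)) M)
    (hΔ : Δi = ⟪x i, x i⟫ - (Finset.univ.erase i).sup' hne fun j => ⟪x i, x j⟫)
    (hcond : Δi ≥ 2 / (α * l) + (1 / α) * Real.log (2 * ((l : ℝ) - 1) * l * α * M ^ 2))
    (ξ : EuclideanSpace ℝ (Fin d)) (hξ : ‖ξ - x i‖ ≤ 1 / (α * l * M)) :
    ‖x i - ∑ j, (Real.exp (α * ⟪x j, ξ⟫) / ∑ m, Real.exp (α * ⟪x m, ξ⟫)) • x j‖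
      ≤ 2 * M * ((l : ℝ) - 1) * Real.exp (2 / (l : ℝ) - α * Δi) := by
  have hl : 0 < l := i.pos
  have hl2 : 2 ≤ l := by
    obtain ⟨j, hj⟩ := hne
    have hji : j ≠ i := Finset.ne_of_mem_erase hj
    have : 1 < Fintype.card (Fin l) := Fintype.one_lt_card_iff.mpr ⟨j, i, hji⟩
    simp at this; omega
  have hM0 : 0 ≤ M := by
    obtain ⟨j, hj⟩ := hM.1
    rw [← hj]; positivity
  have hlR : (1 : ℝ) ≤ (l : ℝ) := by exact_mod_cast hl
  rcases eq_or_lt_of_le hM0 with hMz | hMpos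
  · -- M = 0 case: all vectors are zero
    have hx0 : ∀ j, x j = 0 := by
      intro j
      have : ‖x j‖ ≤ M := hM.2 ⟨j, rfl⟩
      have : ‖x j‖ ≤ 0 := by linarith [hMz]
      simpa using le_antisymm this (norm_nonneg _)
    have h1 : (0:ℝ) ≤ ((l : ℝ) - 1) * Real.exp (2 / (l : ℝ) - α * Δi) := by
      have : (0:ℝ) ≤ (l : ℝ) - 1 := by linarith
      positivity
    simp only [hx0, smul_zero, Finset.sum_const, nsmul_zero, sub_zero, norm_zero, ← hMz]
    nlinarith
  -- Main case: M > 0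
  set S := ∑ m, Real.exp (α * ⟪x m, ξ⟫) with hS
  have hSpos : 0 < S :=
    Finset.sum_pos (fun m _ => Real.exp_pos _) ⟨i, Finset.mem_univ i⟩
  set p : Fin l → ℝ := fun j => Real.exp (α * ⟪x j, ξ⟫) / S with hp
  have hp1 : ∑ j, p j = 1 := by
    rw [hp, ← Finset.sum_div, div_self hSpos.ne']
  have key : x i - ∑ j, p j • x j = ∑ j, p j • (x i - x j) := by
    simp only [smul_sub, Finset.sum_sub_distrib, ← Finset.sum_smul, hp1, one_smul]
  have hSge : Real.exp (α * ⟪x i, ξ⟫) ≤ S :=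
    Finset.single_le_sum (f := fun m => Real.exp (α * ⟪x m, ξ⟫))
      (fun m _ => (Real.exp_pos _).le) (Finset.mem_univ i)
  have hpbound : ∀ j ∈ Finset.univ.erase i, p j ≤ Real.exp (2 / (l : ℝ) - α * Δi) := by
    intro j hj
    have hΔj : ⟪x i, x j⟫ ≤ ⟪x i, x i⟫ - Δi := by
      have hle : ⟪x i, x j⟫ ≤ (Finset.univ.erase i).sup' hne fun j => ⟪x i, x j⟫ :=
        Finset.le_sup' (fun j => ⟪x i, x j⟫) hj
      rw [hΔ]; linarith
    have hnij : ‖x j - x i‖ ≤ 2 * M := by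
      have h1 : ‖x j‖ ≤ M := hM.2 ⟨j, rfl⟩
      have h2 : ‖x i‖ ≤ M := hM.2 ⟨i, rfl⟩
      calc ‖x j - x i‖ ≤ ‖x j‖ + ‖x i‖ := norm_sub_le _ _
        _ ≤ 2 * M := by linarith
    have hcs : ⟪x j - x i, ξ - x i⟫ ≤ 2 / (α * l) := by
      calc ⟪x j - x i, ξ - x i⟫ ≤ ‖x j - x i‖ * ‖ξ - x i‖ := real_inner_le_norm _ _
        _ ≤ (2 * M) * (1 / (α * l * M)) := by
            apply mul_le_mul hnij hξ (norm_nonneg _) (by linarith)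
        _ = 2 / (α * l) := by
            field_simp
    have expand : ⟪x j, ξ⟫ - ⟪x i, ξ⟫
        = (⟪x i, x j⟫ - ⟪x i, x i⟫) + ⟪x j - x i, ξ - x i⟫ := by
      simp only [inner_sub_left, inner_sub_right]
      rw [real_inner_comm (x j) (x i)]
      ring
    have h1 : ⟪x j, ξ⟫ - ⟪x i, ξ⟫ ≤ -Δi + 2 / (α * l) := by
      rw [expand]; linarith
    have h2 : α * (2 / (α * l)) = 2 / l := by
      field_simp
    have hexp : α * ⟪x j, ξ⟫ - α * ⟪x i, ξ⟫ ≤ 2 / (l : ℝ) - α * Δi := by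
      nlinarith [mul_le_mul_of_nonneg_left h1 hα.le]
    calc p j ≤ Real.exp (α * ⟪x j, ξ⟫) / Real.exp (α * ⟪x i, ξ⟫) := by
          show Real.exp (α * ⟪x j, ξ⟫) / S ≤ _
          gcongr
      _ = Real.exp (α * ⟪x j, ξ⟫ - α * ⟪x i, ξ⟫) := (Real.exp_sub _ _).symm
      _ ≤ Real.exp (2 / (l : ℝ) - α * Δi) := Real.exp_le_exp.mpr hexp
  calc ‖x i - ∑ j, p j • x j‖ = ‖∑ j, p j • (x i - x j)‖ := by rw [key]
    _ ≤ ∑ j, ‖p j • (x i - x j)‖ := norm_sum_le _ _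
    _ = ∑ j ∈ Finset.univ.erase i, ‖p j • (x i - x j)‖ + ‖p i • (x i - x i)‖ :=
        (Finset.sum_erase_add _ _ (Finset.mem_univ i)).symm
    _ = ∑ j ∈ Finset.univ.erase i, ‖p j • (x i - x j)‖ := by simp
    _ ≤ ∑ _j ∈ Finset.univ.erase i, Real.exp (2 / (l : ℝ) - α * Δi) * (2 * M) := by
        apply Finset.sum_le_sum
        intro j hj
        rw [norm_smul, Real.norm_eq_abs,
          abs_of_nonneg (by positivity : (0:ℝ) ≤ p j)]
        have hnij : ‖x i - x j‖ ≤ 2 * M := by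
          have h1 : ‖x j‖ ≤ M := hM.2 ⟨j, rfl⟩
          have h2 : ‖x i‖ ≤ M := hM.2 ⟨i, rfl⟩
          calc ‖x i - x j‖ ≤ ‖x i‖ + ‖x j‖ := norm_sub_le _ _
            _ ≤ 2 * M := by linarith
        exact mul_le_mul (hpbound j hj) hnij (norm_nonneg _) (Real.exp_pos _).le
    _ = ((l : ℝ) - 1) * (Real.exp (2 / (l : ℝ) - α * Δi) * (2 * M)) := by
        rw [Finset.sum_const, Finset.card_erase_of_mem (Finset.mem_univ i)]
        simp only [Finset.card_univ, Fintype.card_fin, nsmul_eq_mul]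
        rw [Nat.cast_sub hl]
        norm_num
    _ = 2 * M * ((l : ℝ) - 1) * Real.exp (2 / (l : ℝ) - α * Δi) := by ring
end

section
/- Let x_1, ..., x_l be columns of X ∈ R^{d×l} with M = max_j ||x_j||, and suppose the Gram-type matrix α·X^T·X is fed to a columnwise softmax. If X is Δ-separated with Δ ≥ 2/(α·l) + (1/α)·log(2(l-1)·l·α·M²), then for every i, the i-th column of X·softmax(α·X^T·X) is within Euclidean distance 2M(l-1)·exp(2/l - α·Δ) of x_i. -/
open RealInnerProductSpace Finset Real

/-!
The `i`-th output column is a convex combination of the tokens, so its distance to `x i` is at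
most `∑ⱼ wⱼ ‖x i - x j‖ ≤ 2M ∑_{j ≠ i} wⱼ`. Separation gives each off-diagonal score a gap of at
least `αΔ` below the diagonal one, and a softmax weight is at most `exp` of its gap to any other
score, so every `wⱼ` with `j ≠ i` is at most `exp (-αΔ)`.
-/

lemma norm_sub_sum_smul_le_sum_mul_norm_sub {ι E : Type*} [Fintype ι] [SeminormedAddCommGroup E]
    [NormedSpace ℝ E] {w : ι → ℝ} (hw0 : ∀ j, 0 ≤ w j) (hw1 : ∑ j, w j = 1) (v : E) (x : ι → E) :
    ‖v - ∑ j, w j • x j‖ ≤ ∑ j, w j * ‖v - x j‖ := by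
  have hconv : v - ∑ j, w j • x j = ∑ j, w j • (v - x j) := by
    simp only [smul_sub, sum_sub_distrib, ← sum_smul, hw1, one_smul]
  rw [hconv]
  refine (norm_sum_le _ _).trans_eq (sum_congr rfl fun j _ => ?_)
  rw [norm_smul, Real.norm_of_nonneg (hw0 j)]

lemma exp_div_sum_exp_le_exp_sub {ι : Type*} [Fintype ι] (s : ι → ℝ) (i j : ι) :
    exp (s j) / ∑ m, exp (s m) ≤ exp (s j - s i) := by
  rw [exp_sub]
  exact div_le_div_of_nonneg_left (exp_pos _).le (exp_pos _)
    (single_le_sum (fun m _ => (exp_pos (s m)).le) (mem_univ i))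

theorem norm_sub_sum_softmax_smul_le {ι E : Type*} [Fintype ι] [SeminormedAddCommGroup E]
    [NormedSpace ℝ E] (s : ι → ℝ) (x : ι → E) (i : ι) {c D : ℝ}
    (hgap : ∀ j, j ≠ i → s j + c ≤ s i) (hD : ∀ j, ‖x i - x j‖ ≤ D) :
    ‖x i - ∑ j, (exp (s j) / ∑ m, exp (s m)) • x j‖
      ≤ ((Fintype.card ι : ℝ) - 1) * D * exp (-c) := by
  classical
  have hZ : 0 < ∑ m, exp (s m) := sum_pos (fun m _ => exp_pos (s m)) ⟨i, mem_univ i⟩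
  have hw1 : ∑ j, exp (s j) / ∑ m, exp (s m) = 1 := by rw [← sum_div, div_self hZ.ne']
  have hterm : ∀ j ∈ univ.erase i,
      exp (s j) / (∑ m, exp (s m)) * ‖x i - x j‖ ≤ D * exp (-c) := by
    intro j hj
    have hw : exp (s j) / ∑ m, exp (s m) ≤ exp (-c) :=
      (exp_div_sum_exp_le_exp_sub s i j).trans
        (exp_le_exp.mpr (by linarith [hgap j (ne_of_mem_erase hj)]))
    rw [mul_comm D]
    exact mul_le_mul hw (hD j) (norm_nonneg _) (exp_pos _).le
  calc ‖x i - ∑ j, (exp (s j) / ∑ m, exp (s m)) • x j‖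
      ≤ ∑ j, exp (s j) / (∑ m, exp (s m)) * ‖x i - x j‖ :=
        norm_sub_sum_smul_le_sum_mul_norm_sub (fun j => by positivity) hw1 _ _
    _ = ∑ j ∈ univ.erase i, exp (s j) / (∑ m, exp (s m)) * ‖x i - x j‖ :=
        (sum_erase _ (by simp)).symm
    _ ≤ (univ.erase i).card • (D * exp (-c)) := sum_le_card_nsmul _ _ _ hterm
    _ = ((Fintype.card ι : ℝ) - 1) * D * exp (-c) := by
        rw [card_erase_of_mem (mem_univ i), card_univ, nsmul_eq_mul,
          Nat.cast_pred (Fintype.card_pos_iff.mpr ⟨i⟩)]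
        ring

theorem stmt10_general (d l : ℕ) (x : Fin l → EuclideanSpace ℝ (Fin d))
    (α M Δ : ℝ) (hα : 0 < α)
    (hM : IsGreatest (Set.range (fun j => ‖x j‖)) M)
    (hsep : ∀ i j, j ≠ i → Δ ≤ ⟪x i, x i⟫ - ⟪x i, x j⟫) :
    ∀ i, ‖x i - ∑ j, (Real.exp (α * ⟪x j, x i⟫) / ∑ m, Real.exp (α * ⟪x m, x i⟫)) • x j‖
      ≤ 2 * M * ((l : ℝ) - 1) * Real.exp (2 / (l : ℝ) - α * Δ) := by
  intro i
  have hgap : ∀ j, j ≠ i → α * ⟪x j, x i⟫ + α * Δ ≤ α * ⟪x i, x i⟫ := by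
    intro j hj
    rw [real_inner_comm]
    nlinarith [hsep i j hj]
  have hdiam : ∀ j, ‖x i - x j‖ ≤ 2 * M := fun j =>
    (norm_sub_le _ _).trans (by linarith [hM.2 ⟨i, rfl⟩, hM.2 ⟨j, rfl⟩])
  have hl : (0 : ℝ) ≤ l - 1 := by
    have : (1 : ℝ) ≤ l := by exact_mod_cast Fin.pos i
    linarith
  have hM0 : 0 ≤ M := (norm_nonneg _).trans (hM.2 ⟨i, rfl⟩)
  calc _ ≤ ((l : ℝ) - 1) * (2 * M) * exp (-(α * Δ)) := by
        simpa only [Fintype.card_fin] using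
          norm_sub_sum_softmax_smul_le (fun j => α * ⟪x j, x i⟫) x i hgap hdiam
    _ ≤ 2 * M * ((l : ℝ) - 1) * exp (2 / (l : ℝ) - α * Δ) := by
        rw [mul_comm ((l : ℝ) - 1)]
        gcongr
        linarith [show (0 : ℝ) ≤ 2 / l by positivity]

/-- If the tokens `x₁, …, x_l` are `Δ`-separated with
`Δ ≥ 2/(αl) + (1/α) log (2(l-1)lαM²)` where `M = max_j ‖xⱼ‖`, then each column of
`X softmax(α Xᵀ X)` is within Euclidean distance `2M(l-1) exp(2/l - αΔ)` of the
corresponding token: self-attention acts approximately as the identity. -/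
theorem stmt10 (d l : ℕ) (x : Fin l → EuclideanSpace ℝ (Fin d))
    (α M Δ : ℝ) (hα : 0 < α)
    (hM : IsGreatest (Set.range (fun j => ‖x j‖)) M)
    (hsep : ∀ i j, j ≠ i → Δ ≤ ⟪x i, x i⟫ - ⟪x i, x j⟫)
    (hcond : Δ ≥ 2 / (α * l) + (1 / α) * Real.log (2 * ((l : ℝ) - 1) * l * α * M ^ 2)) :
    ∀ i, ‖x i - ∑ j, (Real.exp (α * ⟪x j, x i⟫) / ∑ m, Real.exp (α * ⟪x m, x i⟫)) • x j‖
      ≤ 2 * M * ((l : ℝ) - 1) * Real.exp (2 / (l : ℝ) - α * Δ) :=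
  stmt10_general d l x α M Δ hα hM hsep
end
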